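/- arXiv:2604.15442 — 2 statements merged into one kernel-verified Lean document; each statement's English description precedes it below -/
import Mathlib

section
/- There exists a constant C > 0 such that for all integers l ≥ 1, ∫_{|u| ≤ C·l^{-1/2}} (cos u)^{2l+1} du ≥ (1/2)·∫_{-π/2}^{π/2} (cos u)^{2l+1} du. -/
open MeasureTheory Real

private lemma quad_le_pow (x : ℝ) (hx : 0 ≤ x) :
    ∀ n : ℕ, 1 + n * x + n * ((n:ℝ) - 1) / 2 * x ^ 2 ≤ (1 + x) ^ n := by
  intro n
  induction n with
  | zero => norm_num
  | succ m ih =>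
    have h1 : (0:ℝ) ≤ (1+x)^m := by positivity
    have hm : (0:ℝ) ≤ (m:ℝ) := Nat.cast_nonneg m
    have key : 1 + ((m:ℝ)+1) * x + ((m:ℝ)+1) * (((m:ℝ)+1) - 1) / 2 * x ^ 2
        ≤ (1 + (m:ℝ)*x + (m:ℝ)*((m:ℝ)-1)/2*x^2) * (1+x) := by
      rcases Nat.eq_zero_or_pos m with hm0 | hm0
      · subst hm0; push_cast; nlinarith [sq_nonneg x]
      · have hm1 : (1:ℝ) ≤ (m:ℝ) := by exact_mod_cast hm0
        nlinarith [mul_nonneg (mul_nonneg (by linarith : (0:ℝ) ≤ (m:ℝ)-1) hm) (pow_nonneg hx 3)]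
    calc 1 + ((m+1:ℕ):ℝ) * x + ((m+1:ℕ):ℝ) * (((m+1:ℕ):ℝ) - 1) / 2 * x ^ 2
        ≤ (1 + (m:ℝ)*x + (m:ℝ)*((m:ℝ)-1)/2*x^2) * (1+x) := by push_cast; convert key using 2
      _ ≤ (1+x)^m * (1+x) := mul_le_mul_of_nonneg_right ih (by linarith)
      _ = (1+x)^(m+1) := by ring

private lemma pow_one_sub_le (x : ℝ) (hx : 0 ≤ x) (hx1 : x ≤ 1) (n : ℕ) :
    (1 - x) ^ n ≤ ((1 + x) ^ n)⁻¹ := by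
  have h0 : (0:ℝ) < 1 + x := by linarith
  have h : 1 - x ≤ (1 + x)⁻¹ := by
    rw [← one_div, le_div_iff₀ h0]; nlinarith
  calc (1-x)^n ≤ ((1+x)⁻¹)^n := pow_le_pow_left₀ (by linarith) h n
    _ = ((1+x)^n)⁻¹ := by rw [inv_pow]

private lemma cosA_ub (A : ℝ) (hA0 : 0 < A) (hA32 : A ≤ 3/2) : Real.cos A ≤ 1 - A^2/3 := by
  have hhalf : Real.sin (A/2)^2 = 1/2 - Real.cos A / 2 := by
    have := Real.sin_sq_eq_half_sub (A/2)
    rw [show 2*(A/2) = A by ring] at this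
    exact this
  have ht1 : (0:ℝ) < A/2 := by linarith
  have ht2 : A/2 ≤ 1 := by linarith
  have ht3 : (A/2)^2 ≤ 9/16 := by nlinarith
  have hs3 : A/2 - (A/2)^3/4 < Real.sin (A/2) := by have := Real.sin_gt_sub_cube ht1; linarith [pow_pos ht1 3]
  have hq : 0 ≤ A/2 - (A/2)^3/4 := by
    nlinarith [mul_nonneg ht1.le (by nlinarith : (0:ℝ) ≤ 1 - (A/2)^2/4)]
  have hsq : (A/2 - (A/2)^3/4)^2 ≤ Real.sin (A/2)^2 := pow_le_pow_left₀ hq hs3.le 2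
  have hpos : 0 ≤ 1/3 - (A/2)^2/2 + ((A/2)^2)^2/16 := by
    nlinarith [sq_nonneg ((A/2)^2 - 9/16)]
  nlinarith [mul_nonneg (sq_nonneg (A/2)) hpos]

set_option maxHeartbeats 2000000 in
/-- Half of the mass of `(cos u)^{2l+1}` is concentrated in a band of width `≈ l^{-1/2}`. -/
theorem cos_pow_mass_concentration :
    ∃ C : ℝ, 0 < C ∧ ∀ l : ℕ, 1 ≤ l →
      (1/2 : ℝ) * ∫ u in (-(π/2))..(π/2), (Real.cos u) ^ (2 * l + 1) ≤
        ∫ u in (-(C * (l : ℝ) ^ (-(1/2 : ℝ))))..(C * (l : ℝ) ^ (-(1/2 : ℝ))),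
          (Real.cos u) ^ (2 * l + 1) := by
  refine ⟨3/2, by norm_num, ?_⟩
  intro l hl
  have hL : (1:ℝ) ≤ (l:ℝ) := by exact_mod_cast hl
  have hL0 : (0:ℝ) < (l:ℝ) := by linarith
  set s : ℝ := Real.sqrt l with hs
  have hs0 : 0 < s := Real.sqrt_pos.mpr hL0
  have hs1 : 1 ≤ s := by
    rw [hs, show (1:ℝ) = Real.sqrt 1 by simp]
    exact Real.sqrt_le_sqrt hL
  have hssq : s ^ 2 = (l:ℝ) := Real.sq_sqrt hL0.le
  have hrpow : (l:ℝ) ^ (-(1/2:ℝ)) = 1 / s := by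
    rw [Real.rpow_neg hL0.le, ← Real.sqrt_eq_rpow, one_div, hs]
  set A : ℝ := 3/2 * ((l:ℝ) ^ (-(1/2:ℝ))) with hA
  have hAval : A = 3 / (2 * s) := by rw [hA, hrpow]; ring
  have hA0 : 0 < A := by rw [hAval]; positivity
  have hA32 : A ≤ 3/2 := by
    rw [hAval, div_le_iff₀ (by positivity)]; nlinarith
  have hpi : (3:ℝ) < π := Real.pi_gt_three
  have hpil : π < 3.15 := Real.pi_lt_d2
  have hA2 : A ≤ π / 2 := by linarith
  have hAsq : A ^ 2 = 9 / (4 * (l:ℝ)) := by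
    rw [hAval, div_pow, mul_pow, hssq]; norm_num
  -- integrability
  have hcont : ∀ a b : ℝ, IntervalIntegrable (fun u => Real.cos u ^ (2*l+1)) volume a b :=
    fun a b => (Real.continuous_cos.pow _).intervalIntegrable a b
  -- symmetry
  have hsym : (∫ u in (-(π/2))..(-A), Real.cos u ^ (2*l+1))
      = ∫ u in A..(π/2), Real.cos u ^ (2*l+1) := by
    simpa [Real.cos_neg] using
      (intervalIntegral.integral_comp_neg (a := A) (b := π/2)
        (fun u => Real.cos u ^ (2*l+1))).symm
  -- split
  have h1 := intervalIntegral.integral_add_adjacent_intervals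
    (hcont (-(π/2)) (-A)) (hcont (-A) A)
  have h2 := intervalIntegral.integral_add_adjacent_intervals
    (hcont (-(π/2)) A) (hcont A (π/2))
  set I : ℝ := ∫ u in (-(π/2))..(π/2), Real.cos u ^ (2*l+1) with hI
  set T : ℝ := ∫ u in A..(π/2), Real.cos u ^ (2*l+1) with hT
  set M : ℝ := ∫ u in (-A)..A, Real.cos u ^ (2*l+1) with hM
  have hsplit : I = M + 2 * T := by linarith [h1, h2, hsym]
  -- suffices 4T ≤ I
  suffices h4T : 4 * T ≤ I by linarith
  -- tail bound
  have hsinA : 2/π * A ≤ Real.sin A := Real.mul_le_sin hA0.le hA2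
  have hT0 : 0 ≤ T := by
    rw [hT]
    apply intervalIntegral.integral_nonneg hA2
    intro u hu
    exact pow_nonneg (Real.cos_nonneg_of_mem_Icc ⟨by linarith [hu.1], hu.2⟩) _
  have hstep1 : Real.sin A * T ≤ ∫ u in A..(π/2), Real.sin u * Real.cos u ^ (2*l+1) := by
    rw [hT, ← intervalIntegral.integral_const_mul]
    apply intervalIntegral.integral_mono_on hA2
      ((continuous_const.mul (Real.continuous_cos.pow _)).intervalIntegrable _ _)
      ((Real.continuous_sin.mul (Real.continuous_cos.pow _)).intervalIntegrable _ _)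
    intro u hu
    have hcos : 0 ≤ Real.cos u := Real.cos_nonneg_of_mem_Icc ⟨by linarith [hu.1], hu.2⟩
    have hsin : Real.sin A ≤ Real.sin u :=
      Real.strictMonoOn_sin.monotoneOn ⟨by linarith, hA2⟩ ⟨by linarith [hu.1], hu.2⟩ hu.1
    exact mul_le_mul_of_nonneg_right hsin (pow_nonneg hcos _)
  have hstep2 : (∫ u in A..(π/2), Real.sin u * Real.cos u ^ (2*l+1))
      = Real.cos A ^ (2*l+2) / (2*(l:ℝ)+2) := by
    have hder : ∀ u ∈ Set.uIcc A (π/2),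
        HasDerivAt (fun v => -(Real.cos v ^ (2*l+2)) / (2*(l:ℝ)+2))
          (Real.sin u * Real.cos u ^ (2*l+1)) u := by
      intro u _
      have h := ((Real.hasDerivAt_cos u).fun_pow (2*l+2)).fun_neg.div_const ((2*l+2 : ℕ) : ℝ)
      simp only [Nat.add_sub_cancel, Nat.cast_add, Nat.cast_mul, Nat.cast_ofNat] at h
      refine h.congr_deriv ?_
      have hne : (2*(l:ℝ)+2) ≠ 0 := by positivity
      rw [show 2*l+2-1 = 2*l+1 by omega]
      field_simp
    rw [intervalIntegral.integral_eq_sub_of_hasDerivAt hder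
      ((Real.continuous_sin.mul (Real.continuous_cos.pow _)).intervalIntegrable _ _)]
    rw [Real.cos_pi_div_two, zero_pow (by omega)]
    ring
  -- lower bound on the whole integral
  have hIlow : 5 / (8 * s) ≤ I := by
    set B : ℝ := 1/(2*s) with hB
    have hB0 : 0 < B := by positivity
    have hB12 : B ≤ 1/2 := by rw [hB, div_le_div_iff₀ (by positivity) (by norm_num)]; nlinarith
    have hBsq : B^2 = 1/(4*(l:ℝ)) := by rw [hB, div_pow, mul_pow, hssq]; norm_num
    have hBpi : B ≤ π/2 := by linarith
    have hcB : 1 - B^2/2 ≤ Real.cos B := Real.one_sub_sq_div_two_le_cos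
    have h18 : 1/(8*(l:ℝ)) ≤ 1/8 := by
      rw [div_le_div_iff₀ (by positivity) (by norm_num)]; nlinarith
    have hcB' : 1 - 1/(8*(l:ℝ)) ≤ Real.cos B := by
      have : B^2/2 = 1/(8*(l:ℝ)) := by rw [hBsq]; ring
      linarith
    have hbern := one_add_mul_le_pow (a := -(1/(8*(l:ℝ)))) (by nlinarith) (2*l+1)
    have hcast : ((2*l+1 : ℕ) : ℝ) = 2*(l:ℝ)+1 := by push_cast; ring
    have h58 : (5/8 : ℝ) ≤ (1 - 1/(8*(l:ℝ)))^(2*l+1) := by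
      rw [hcast] at hbern
      have h1 : (2*(l:ℝ)+1) * (1/(8*(l:ℝ))) ≤ 3/8 := by
        rw [mul_one_div, div_le_div_iff₀ (by positivity) (by norm_num)]; nlinarith
      calc (5/8:ℝ) ≤ 1 + (2*(l:ℝ)+1) * (-(1/(8*(l:ℝ)))) := by nlinarith
        _ ≤ (1 + -(1/(8*(l:ℝ))))^(2*l+1) := hbern
        _ = (1 - 1/(8*(l:ℝ)))^(2*l+1) := by ring_nf
    have hcBpow : (5/8 : ℝ) ≤ Real.cos B ^ (2*l+1) :=
      h58.trans (pow_le_pow_left₀ (by linarith) hcB' _)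
    have hmid : 2*B*(5/8) ≤ ∫ u in (-B)..B, Real.cos u ^ (2*l+1) := by
      have hptwise : ∀ u ∈ Set.Icc (-B) B, (5/8:ℝ) ≤ Real.cos u ^ (2*l+1) := by
        intro u hu
        have habs : |u| ≤ B := abs_le.mpr ⟨hu.1, hu.2⟩
        have hcos : Real.cos B ≤ Real.cos u := by
          rw [← Real.cos_abs u]
          exact Real.cos_le_cos_of_nonneg_of_le_pi (abs_nonneg u) (by linarith) habs
        exact hcBpow.trans (pow_le_pow_left₀ (by linarith) hcos _)
      have := intervalIntegral.integral_mono_on (by linarith : -B ≤ B)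
        (intervalIntegrable_const) (hcont _ _) hptwise
      rw [intervalIntegral.integral_const, smul_eq_mul] at this
      calc 2*B*(5/8) = (B - -B) * (5/8) := by ring
        _ ≤ _ := this
    have hb1 := intervalIntegral.integral_add_adjacent_intervals
      (hcont (-(π/2)) (-B)) (hcont (-B) B)
    have hb2 := intervalIntegral.integral_add_adjacent_intervals
      (hcont (-(π/2)) B) (hcont B (π/2))
    have htail1 : 0 ≤ ∫ u in (-(π/2))..(-B), Real.cos u ^ (2*l+1) := by
      apply intervalIntegral.integral_nonneg (by linarith)
      intro u hu
      exact pow_nonneg (Real.cos_nonneg_of_mem_Icc ⟨hu.1, by linarith [hu.2]⟩) _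
    have htail2 : 0 ≤ ∫ u in B..(π/2), Real.cos u ^ (2*l+1) := by
      apply intervalIntegral.integral_nonneg (by linarith)
      intro u hu
      exact pow_nonneg (Real.cos_nonneg_of_mem_Icc ⟨by linarith [hu.1], hu.2⟩) _
    have hfin : 5/(8*s) = 2*B*(5/8) := by rw [hB]; field_simp
    rw [hI]
    linarith
  -- upper bound on cos A ^ (2l+2)
  have hRA : Real.cos A ^ (2*l+2) ≤ 8/29 := by
    have hcosA_le : Real.cos A ≤ 1 - A^2/3 := cosA_ub A hA0 hA32
    have hcosA0 : 0 ≤ Real.cos A := Real.cos_nonneg_of_mem_Icc ⟨by linarith, hA2⟩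
    set x : ℝ := 3/(4*(l:ℝ)) with hx
    have hx0 : (0:ℝ) ≤ x := by positivity
    have hx1 : x ≤ 1 := by
      rw [hx, div_le_one (by positivity)]; nlinarith
    have hAx : 1 - A^2/3 = 1 - x := by rw [hAsq, hx]; ring
    have hp1 : Real.cos A ^ (2*l+2) ≤ (1-x)^(2*l+2) :=
      pow_le_pow_left₀ hcosA0 (by rw [← hAx]; exact hcosA_le) _
    have hp2 := pow_one_sub_le x hx0 hx1 (2*l+2)
    have hq := quad_le_pow x hx0 (2*l+2)
    have hcast : ((2*l+2 : ℕ) : ℝ) = 2*(l:ℝ)+2 := by push_cast; ring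
    rw [hcast] at hq
    have hD : (29/8 : ℝ) ≤ 1 + (2*(l:ℝ)+2) * x + (2*(l:ℝ)+2) * ((2*(l:ℝ)+2) - 1)/2 * x^2 := by
      have hh1 : (3/2 : ℝ) ≤ (2*(l:ℝ)+2) * x := by
        have heq : (2*(l:ℝ)+2) * x = (6*(l:ℝ)+6)/(4*(l:ℝ)) := by
          rw [hx]; field_simp; ring
        rw [heq, le_div_iff₀ (by positivity)]; nlinarith
      have hh2 : (9/8 : ℝ) ≤ (2*(l:ℝ)+2) * ((2*(l:ℝ)+2) - 1)/2 * x^2 := by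
        have heq : (2*(l:ℝ)+2) * ((2*(l:ℝ)+2) - 1)/2 * x^2
            = (36*(l:ℝ)^2 + 54*(l:ℝ) + 18)/(32*(l:ℝ)^2) := by
          rw [hx]; field_simp; ring
        rw [heq, le_div_iff₀ (by positivity)]; nlinarith
      linarith
    have hpow29 : (29/8 : ℝ) ≤ (1+x)^(2*l+2) := hD.trans hq
    have hinv : ((1+x)^(2*l+2))⁻¹ ≤ 8/29 := by
      rw [show (8/29:ℝ) = (29/8)⁻¹ by norm_num]
      exact inv_anti₀ (by norm_num) hpow29
    exact hp1.trans (hp2.trans hinv)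
  -- final arithmetic
  have hπ0 : (0:ℝ) < π := by linarith
  have hden : (0:ℝ) < 2*(l:ℝ)+2 := by positivity
  have hstep : Real.sin A * T ≤ Real.cos A ^ (2*l+2) / (2*(l:ℝ)+2) := hstep1.trans_eq hstep2
  have e1 : 2/π*A*T ≤ Real.cos A ^ (2*l+2) / (2*(l:ℝ)+2) :=
    (mul_le_mul_of_nonneg_right hsinA hT0).trans hstep
  have e2 : Real.cos A ^ (2*l+2) / (2*(l:ℝ)+2) ≤ (8/29) / (2*(l:ℝ)+2) := by gcongr
  have e3 : 2/π*A*T ≤ (8/29) / (2*(l:ℝ)+2) := e1.trans e2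
  have e4 : 2*A*T*(2*(l:ℝ)+2) ≤ (8/29)*π := by
    have h := mul_le_mul_of_nonneg_right e3 (le_of_lt (mul_pos hπ0 hden))
    calc 2*A*T*(2*(l:ℝ)+2) = (2/π*A*T) * (π*(2*(l:ℝ)+2)) := by field_simp
      _ ≤ ((8/29)/(2*(l:ℝ)+2)) * (π*(2*(l:ℝ)+2)) := h
      _ = (8/29)*π := by field_simp
  have hAs : A*s = 3/2 := by rw [hAval]; field_simp
  have e5 : 3*T*(2*(l:ℝ)+2) ≤ (8/29)*π*s := by
    have h := mul_le_mul_of_nonneg_right e4 hs0.le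
    calc 3*T*(2*(l:ℝ)+2) = 2*(A*s)*T*(2*(l:ℝ)+2) := by rw [hAs]; ring
      _ = 2*A*T*(2*(l:ℝ)+2)*s := by ring
      _ ≤ (8/29)*π*s := h
  have e6 : 4*T ≤ 5/(8*s) := by
    rw [le_div_iff₀ (by positivity)]
    have hl2 : (l:ℝ) + 1 ≥ s^2 := by rw [hssq]; linarith
    nlinarith [e5, mul_pos hs0 hs0, hT0, sq_nonneg s]
  linarith
end

section
/- Let (X, μ) be a finite measure space, e_1, …, e_N ∈ L²(X, μ) orthonormal and bounded on a measurable set E, and let f ∈ L²(X, μ) with ‖f‖₂ = 1 satisfy ∫_E |f|² dμ ≥ 1 - ε and Σ_{j=1}^N |⟨f, e_j⟩|² ≥ 1 - ε', where ε, ε' ≥ 0 and ε + ε' < 1. Then (1 - ε - ε')² ≤ μ(E) · sup_{x ∈ E} Σ_{j=1}^N |e_j(x)|². -/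
open MeasureTheory
open scoped ComplexInnerProductSpace ENNReal

private lemma lp_coeFn_finset_sum {α E : Type*} [MeasurableSpace α] {μ : Measure α}
    {p : ℝ≥0∞} [NormedAddCommGroup E] {ι : Type*} (s : Finset ι) (f : ι → Lp E p μ) :
    ⇑(∑ i ∈ s, f i) =ᵐ[μ] fun x => ∑ i ∈ s, f i x := by
  classical
  induction s using Finset.induction_on with
  | empty => simp only [Finset.sum_empty]; exact Lp.coeFn_zero (E := E) (p := p) (μ := μ)
  | insert a s hnot ih =>
    rw [Finset.sum_insert hnot]
    filter_upwards [Lp.coeFn_add (f a) (∑ i ∈ s, f i), ih] with x hx1 hx2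
    simp only [hx1, Pi.add_apply, hx2, Finset.sum_insert hnot]

private lemma integral_ofReal' {α : Type*} [MeasurableSpace α] {μ : Measure α} (f : α → ℝ) :
    ∫ x, ((f x : ℝ) : ℂ) ∂μ = ((∫ x, f x ∂μ : ℝ) : ℂ) :=
  integral_ofReal

set_option maxHeartbeats 1000000 in
/-- Quantitative uncertainty principle with the defect factor
`sup_{x ∈ E} Σ_j |e_j(x)|²`. -/
theorem quantitative_uncertainty
    {X : Type*} [MeasurableSpace X] (μ : Measure X) [IsFiniteMeasure μ]
    (N : ℕ) (e : Fin N → X → ℂ) (he2 : ∀ j, MemLp (e j) 2 μ)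
    (horth : ∀ i j : Fin N,
      (∫ x, e i x * (starRingEnd ℂ) (e j x) ∂μ) = if i = j then 1 else 0)
    (E : Set X) (hE : MeasurableSet E)
    (hbdd : ∃ B : ℝ, ∀ j : Fin N, ∀ x ∈ E, ‖e j x‖ ≤ B)
    (f : X → ℂ) (hf2 : MemLp f 2 μ) (hfnorm : ∫ x, ‖f x‖ ^ 2 ∂μ = 1)
    (ε ε' : ℝ) (hε : 0 ≤ ε) (hε' : 0 ≤ ε') (hεε' : ε + ε' < 1)
    (hconc : 1 - ε ≤ ∫ x in E, ‖f x‖ ^ 2 ∂μ)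
    (hspec : 1 - ε' ≤ ∑ j, ‖∫ x, f x * (starRingEnd ℂ) (e j x) ∂μ‖ ^ 2) :
    (1 - ε - ε') ^ 2 ≤ (μ E).toReal * ⨆ x : E, ∑ j, ‖e j (x : X)‖ ^ 2 := by
  classical
  -- E is nonempty
  rcases Set.eq_empty_or_nonempty E with rfl | ⟨x₀, hx₀⟩
  · have h0 : (1 : ℝ) - ε ≤ 0 := by simpa using hconc
    linarith
  obtain ⟨B, hB⟩ := hbdd
  set S : ℝ := ⨆ x : E, ∑ j, ‖e j (x : X)‖ ^ 2 with hSdef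
  have hbdd' : BddAbove (Set.range fun x : E => ∑ j, ‖e j (x : X)‖ ^ 2) := by
    refine ⟨(N : ℝ) * (max B 0) ^ 2, ?_⟩
    rintro _ ⟨⟨x, hx⟩, rfl⟩
    calc ∑ j, ‖e j x‖ ^ 2 ≤ ∑ _j : Fin N, (max B 0) ^ 2 := by
          refine Finset.sum_le_sum fun j _ => ?_
          have h1 := hB j x hx
          have h2 := norm_nonneg (e j x)
          nlinarith [le_max_left B (0 : ℝ), le_max_right B (0 : ℝ)]
      _ = (N : ℝ) * (max B 0) ^ 2 := by
          simp [Finset.sum_const, nsmul_eq_mul]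
  have hS_le : ∀ x, x ∈ E → (∑ j, ‖e j x‖ ^ 2) ≤ S :=
    fun x hx => le_ciSup hbdd' (⟨x, hx⟩ : E)
  have hS0 : 0 ≤ S :=
    le_trans (Finset.sum_nonneg fun j _ => sq_nonneg _) (hS_le x₀ hx₀)
  set M : ℝ := (μ E).toReal * S with hMdef
  have hM0 : 0 ≤ M := mul_nonneg ENNReal.toReal_nonneg hS0
  -- L² machinery
  set F : Lp ℂ 2 μ := hf2.toLp f with hFdef
  set Ee : Fin N → Lp ℂ 2 μ := fun j => (he2 j).toLp (e j) with hEedef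
  set c : Fin N → ℂ := fun j => ⟪Ee j, F⟫ with hcdef
  have hc : ∀ j, c j = ∫ x, f x * (starRingEnd ℂ) (e j x) ∂μ := by
    intro j
    rw [show c j = ⟪Ee j, F⟫ from rfl, MeasureTheory.L2.inner_def]
    refine integral_congr_ae ?_
    filter_upwards [(he2 j).coeFn_toLp, hf2.coeFn_toLp] with x h1 h2
    simp only [hEedef, hFdef, h1, h2, RCLike.inner_apply]
  have horth' : Orthonormal ℂ Ee := by
    rw [orthonormal_iff_ite]
    intro i j
    rw [MeasureTheory.L2.inner_def]
    have h1 : (∫ a, ⟪Ee i a, Ee j a⟫ ∂μ) = ∫ a, e j a * (starRingEnd ℂ) (e i a) ∂μ := by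
      refine integral_congr_ae ?_
      filter_upwards [(he2 i).coeFn_toLp, (he2 j).coeFn_toLp] with x hx1 hx2
      simp only [hEedef, hx1, hx2, RCLike.inner_apply]
    rw [h1, horth j i]
    by_cases h : i = j <;> simp [h, eq_comm]
  -- definition of g = Σ c_j e_j
  set g : X → ℂ := fun x => ∑ j, c j * e j x with hgdef
  have hg2 : MemLp g 2 μ :=
    memLp_finset_sum Finset.univ fun j _ => (he2 j).const_mul (c j)
  set G : Lp ℂ 2 μ := ∑ j, c j • Ee j with hGdef
  have hGae : ⇑G =ᵐ[μ] g := by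
    have h2 : ∀ᵐ x ∂μ, ∀ j : Fin N, (⇑(c j • Ee j)) x = c j * e j x := by
      rw [ae_all_iff]
      intro j
      filter_upwards [Lp.coeFn_smul (c j) (Ee j), (he2 j).coeFn_toLp] with x ha hb
      rw [ha, Pi.smul_apply, smul_eq_mul]; exact congrArg (c j * ·) hb
    filter_upwards [lp_coeFn_finset_sum Finset.univ (fun j => c j • Ee j), h2] with x hx1 hx2
    rw [hGdef]
    rw [hx1]
    simp only [hgdef]
    exact Finset.sum_congr rfl fun j _ => hx2 j
  -- t₂ facts
  set t₂ : ℝ := ∑ j, ‖c j‖ ^ 2 with ht₂def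
  have ht₂0 : 0 ≤ t₂ := Finset.sum_nonneg fun j _ => sq_nonneg _
  have hGF : ⟪G, F⟫ = (t₂ : ℂ) := by
    rw [hGdef, sum_inner]
    simp only [inner_smul_left]
    have : ∀ j : Fin N, (starRingEnd ℂ) (c j) * ⟪Ee j, F⟫ = ((‖c j‖ ^ 2 : ℝ) : ℂ) := by
      intro j
      rw [show ⟪Ee j, F⟫ = c j from rfl]
      simpa using RCLike.conj_mul (c j)
    rw [Finset.sum_congr rfl fun j _ => this j, ht₂def]
    norm_cast
  have hGnorm : ‖G‖ ^ 2 = t₂ := by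
    have h1 := horth'.inner_sum c c Finset.univ
    rw [← hGdef] at h1
    have h2 := inner_self_eq_norm_sq (𝕜 := ℂ) G
    rw [h1] at h2
    rw [← h2, ht₂def]
    rw [map_sum]
    refine Finset.sum_congr rfl fun j _ => ?_
    rw [RCLike.conj_mul, ← RCLike.ofReal_pow]
    exact RCLike.ofReal_re _
  have hFnorm : ‖F‖ = 1 := by
    have h1 : ⟪F, F⟫ = ((1 : ℝ) : ℂ) := by
      rw [MeasureTheory.L2.inner_def]
      have : (∫ a, ⟪F a, F a⟫ ∂μ) = ∫ a, ((‖f a‖ ^ 2 : ℝ) : ℂ) ∂μ := by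
        refine integral_congr_ae ?_
        filter_upwards [hf2.coeFn_toLp] with x hx
        simp only [hFdef, hx, RCLike.inner_apply]
        simpa [mul_comm] using RCLike.conj_mul (f x)
      rw [this, integral_ofReal' (fun a => ‖f a‖ ^ 2), hfnorm]
    have h2 := inner_self_eq_norm_sq (𝕜 := ℂ) F
    rw [h1] at h2
    simp only [Complex.ofReal_one, RCLike.one_re] at h2
    nlinarith [norm_nonneg F]
  -- a generic formula for inner products against an indicator element
  have hind : ∀ (φ : X → ℂ) (hφE : MemLp (E.indicator φ) 2 μ) (ψ : X → ℂ)
      (G' : Lp ℂ 2 μ), (⇑G' =ᵐ[μ] ψ) →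
      ⟪hφE.toLp (E.indicator φ), G'⟫ = ∫ x in E, (starRingEnd ℂ) (φ x) * ψ x ∂μ := by
    intro φ hφE ψ G' hG'
    rw [MeasureTheory.L2.inner_def]
    have h1 : (∫ a, ⟪(hφE.toLp (E.indicator φ)) a, G' a⟫ ∂μ) =
        ∫ a, E.indicator (fun x => (starRingEnd ℂ) (φ x) * ψ x) a ∂μ := by
      refine integral_congr_ae ?_
      filter_upwards [hφE.coeFn_toLp, hG'] with x hx1 hx2
      rw [hx1, hx2, RCLike.inner_apply]
      by_cases hx : x ∈ E
      · simp [Set.indicator_of_mem hx, mul_comm]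
      · simp [Set.indicator_of_notMem hx]
    rw [h1, integral_indicator hE]
  -- t₁ facts
  set t₁ : ℝ := ∫ x in E, ‖f x‖ ^ 2 ∂μ with ht₁def
  have ht₁0 : 0 ≤ t₁ := integral_nonneg fun x => sq_nonneg _
  set A : Lp ℂ 2 μ := (hf2.indicator hE).toLp (E.indicator f) with hAdef
  have hAae : ⇑A =ᵐ[μ] E.indicator f := (hf2.indicator hE).coeFn_toLp
  have hsq : ∀ z : ℂ, (starRingEnd ℂ) z * z = ((‖z‖ ^ 2 : ℝ) : ℂ) := by
    intro z; simpa using RCLike.conj_mul z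
  have hAF : ⟪A, F⟫ = ((t₁ : ℝ) : ℂ) := by
    rw [hAdef, hind f (hf2.indicator hE) f F hf2.coeFn_toLp]
    rw [show (∫ x in E, (starRingEnd ℂ) (f x) * f x ∂μ)
        = ∫ x in E, ((‖f x‖ ^ 2 : ℝ) : ℂ) ∂μ from integral_congr_ae
          (ae_of_all _ fun x => hsq (f x))]
    rw [integral_ofReal' (fun x => ‖f x‖ ^ 2)]
  have hAnorm : ‖A‖ ^ 2 = t₁ := by
    have h1 : ⟪A, A⟫ = ((t₁ : ℝ) : ℂ) := by
      rw [hAdef, hind f (hf2.indicator hE) (E.indicator f) A hAae]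
      have h2 : ∀ x ∈ E, (starRingEnd ℂ) (f x) * (E.indicator f) x
          = ((‖f x‖ ^ 2 : ℝ) : ℂ) := by
        intro x hx
        rw [Set.indicator_of_mem hx, hsq (f x)]
      rw [setIntegral_congr_fun hE h2, integral_ofReal' (fun x => ‖f x‖ ^ 2)]
    have h2 := inner_self_eq_norm_sq (𝕜 := ℂ) A
    rw [h1] at h2
    rw [← h2]
    simp
  -- the indicator of g
  set GE : Lp ℂ 2 μ := (hg2.indicator hE).toLp (E.indicator g) with hGEdef
  have hGEae : ⇑GE =ᵐ[μ] E.indicator g := (hg2.indicator hE).coeFn_toLp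
  have hAG : ⟪A, G⟫ = ⟪A, GE⟫ := by
    rw [hAdef, hind f (hf2.indicator hE) g G hGae,
      hind f (hf2.indicator hE) (E.indicator g) GE hGEae]
    refine setIntegral_congr_fun hE fun x hx => ?_
    rw [Set.indicator_of_mem hx]
  have hGEnorm : ‖GE‖ ^ 2 ≤ t₂ * S * (μ E).toReal := by
    have h1 : ⟪GE, GE⟫ = ((∫ x in E, ‖g x‖ ^ 2 ∂μ : ℝ) : ℂ) := by
      rw [hGEdef, hind g (hg2.indicator hE) (E.indicator g) GE hGEae]
      have h2 : ∀ x ∈ E, (starRingEnd ℂ) (g x) * (E.indicator g) x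
          = ((‖g x‖ ^ 2 : ℝ) : ℂ) := by
        intro x hx
        rw [Set.indicator_of_mem hx, hsq (g x)]
      rw [setIntegral_congr_fun hE h2, integral_ofReal' (fun x => ‖g x‖ ^ 2)]
    have h2 := inner_self_eq_norm_sq (𝕜 := ℂ) GE
    rw [h1] at h2
    have h3 : ‖GE‖ ^ 2 = ∫ x in E, ‖g x‖ ^ 2 ∂μ := by
      rw [← h2]
      simp
    rw [h3]
    have hint : IntegrableOn (fun x => ‖g x‖ ^ 2) E μ := by
      have := (hg2.restrict E).integrable_norm_rpow (by norm_num) (by norm_num)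
      simpa [ENNReal.toReal_ofNat, Real.rpow_natCast, IntegrableOn] using this
    have hptw : ∀ x ∈ E, ‖g x‖ ^ 2 ≤ t₂ * S := by
      intro x hx
      have h4 : ‖g x‖ ≤ ∑ j, ‖c j‖ * ‖e j x‖ := by
        refine (norm_sum_le _ _).trans_eq ?_
        exact Finset.sum_congr rfl fun j _ => norm_mul _ _
      have h5 : (∑ j, ‖c j‖ * ‖e j x‖) ^ 2
          ≤ (∑ j, ‖c j‖ ^ 2) * (∑ j, ‖e j x‖ ^ 2) :=
        Finset.sum_mul_sq_le_sq_mul_sq Finset.univ _ _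
      have h6 : (∑ j, ‖e j x‖ ^ 2) ≤ S := hS_le x hx
      have h7 : 0 ≤ ∑ j, ‖e j x‖ ^ 2 := Finset.sum_nonneg fun j _ => sq_nonneg _
      have h8 : 0 ≤ ∑ j, ‖c j‖ * ‖e j x‖ :=
        Finset.sum_nonneg fun j _ => mul_nonneg (norm_nonneg _) (norm_nonneg _)
      nlinarith [norm_nonneg (g x)]
    calc (∫ x in E, ‖g x‖ ^ 2 ∂μ) ≤ ∫ _x in E, t₂ * S ∂μ :=
          setIntegral_mono_on hint (integrableOn_const (measure_lt_top μ E).ne)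
            hE hptw
      _ = t₂ * S * (μ E).toReal := by rw [setIntegral_const]; ring_nf; rw [measureReal_def]
  -- hypotheses in terms of t₁, t₂
  have ht₁ : 1 - ε ≤ t₁ := hconc
  have ht₂ : 1 - ε' ≤ t₂ := by
    rw [ht₂def]
    refine hspec.trans (le_of_eq ?_)
    exact Finset.sum_congr rfl fun j _ => by rw [hc j]
  -- main chain
  set t : ℝ := t₁ + t₂ with htdef
  have ht : 1 + (1 - ε - ε') ≤ t := by rw [htdef]; linarith
  have key1 : t ≤ ‖A + G‖ := by
    have h1 := re_inner_le_norm (𝕜 := ℂ) (A + G) F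
    rw [hFnorm, mul_one] at h1
    have h2 : ⟪A + G, F⟫ = ((t : ℝ) : ℂ) := by
      rw [inner_add_left, hAF, hGF, htdef]
      push_cast; ring
    rw [h2] at h1
    simpa using h1
  have key2 : ‖A + G‖ ^ 2 = t + 2 * RCLike.re ⟪A, G⟫ := by
    rw [norm_add_sq (𝕜 := ℂ), hAnorm, hGnorm, htdef]
    ring
  have key3 : RCLike.re ⟪A, G⟫ ≤ Real.sqrt t₁ * Real.sqrt (t₂ * S * (μ E).toReal) := by
    rw [hAG]
    refine (re_inner_le_norm (𝕜 := ℂ) A GE).trans ?_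
    have hA' : ‖A‖ = Real.sqrt t₁ := by
      rw [← hAnorm, Real.sqrt_sq (norm_nonneg A)]
    have hGE' : ‖GE‖ ≤ Real.sqrt (t₂ * S * (μ E).toReal) := by
      have := Real.sqrt_le_sqrt hGEnorm
      rwa [Real.sqrt_sq (norm_nonneg GE)] at this
    rw [hA']
    exact mul_le_mul_of_nonneg_left hGE' (Real.sqrt_nonneg _)
  -- conclude
  have hsqrtM : Real.sqrt (t₂ * S * (μ E).toReal) = Real.sqrt t₂ * Real.sqrt M := by
    rw [hMdef, ← Real.sqrt_mul ht₂0]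
    ring_nf
  have hams : Real.sqrt t₁ * Real.sqrt t₂ ≤ t / 2 := by
    have h1 : Real.sqrt t₁ ^ 2 = t₁ := Real.sq_sqrt ht₁0
    have h2 : Real.sqrt t₂ ^ 2 = t₂ := Real.sq_sqrt ht₂0
    nlinarith [sq_nonneg (Real.sqrt t₁ - Real.sqrt t₂)]
  have hm0 : 0 ≤ Real.sqrt M := Real.sqrt_nonneg M
  have ht0 : 0 < t := by nlinarith
  have key4 : t ^ 2 ≤ t + t * Real.sqrt M := by
    have h1 : t ^ 2 ≤ ‖A + G‖ ^ 2 := by nlinarith [norm_nonneg (A + G)]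
    rw [key2] at h1
    have h2 : RCLike.re ⟪A, G⟫ ≤ (t / 2) * Real.sqrt M := by
      refine key3.trans ?_
      rw [hsqrtM, ← mul_assoc]
      exact mul_le_mul_of_nonneg_right hams hm0
    nlinarith
  have h6 : t * t ≤ t * (1 + Real.sqrt M) := by
    calc t * t = t ^ 2 := (sq t).symm
      _ ≤ t + t * Real.sqrt M := key4
      _ = t * (1 + Real.sqrt M) := by ring
  have h7 : t ≤ 1 + Real.sqrt M := le_of_mul_le_mul_left h6 ht0
  have key5 : 1 - ε - ε' ≤ Real.sqrt M := by linarith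
  have hδ0 : 0 ≤ 1 - ε - ε' := by linarith
  calc (1 - ε - ε') ^ 2 ≤ Real.sqrt M ^ 2 := pow_le_pow_left₀ hδ0 key5 2
    _ = M := Real.sq_sqrt hM0
end
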